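/- arXiv:1711.06481 — 4 statements merged into one kernel-verified Lean document; each statement's English description precedes it below -/
import Mathlib

section
/- Let G be a second-countable unimodular locally compact Hausdorff group with Haar measure μ_G, Γ a discrete subgroup, and φ ∈ L¹(G). Suppose there exists a Borel set C ⊆ G with ∫_C |φ| dμ_G > ∫_{G∖C} |φ| dμ_G and C·C⁻¹ ∩ Γ = {1}. Then the Poincaré series P_Γ φ(g) = Σ_{γ∈Γ} φ(γg) is not zero as an element of L¹(Γ\G). -/
/-!
If `∑_{γ ∈ Γ} φ(γ g) = 0`, then `|φ(g)| ≤ ∑_{γ ≠ 1} |φ(γ g)|`. Integrating this over `C` and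
unfolding, the right-hand side becomes the integral of `|φ|` over `⋃_{γ ≠ 1} γ C`. The condition
`C C⁻¹ ∩ Γ = {1}` makes the translates `γ C` pairwise disjoint, so this union lies in `Cᶜ` and
the integral is at most `∫_{Cᶜ} |φ|`, contradicting the hypothesis on `C`.
-/

open Function MeasureTheory Pointwise
open scoped ENNReal

theorem enorm_le_tsum_compl_singleton_enorm_of_tsum_eq_zero {ι E : Type*}
    [NormedAddCommGroup E] [CompleteSpace E] {u : ι → E} (hu : ∑' j, u j = 0) (i : ι) :
    ‖u i‖ₑ ≤ ∑' j : ({i}ᶜ : Set ι), ‖u j‖ₑ := by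
  by_cases hfin : ∑' j : ({i}ᶜ : Set ι), ‖u j‖ₑ = ∞
  · simp [hfin]
  have hsum : HasSum u (u i + ∑' j : ({i}ᶜ : Set ι), u j) :=
    (hasSum_singleton i u).add_compl (Summable.of_enorm hfin).hasSum
  rw [hsum.tsum_eq, add_eq_zero_iff_eq_neg] at hu
  rw [hu, enorm_neg]
  exact enorm_tsum_le_tsum_enorm

theorem Subgroup.pairwise_disjoint_smul_of_mul_inv_inter_subset_one {G : Type*} [Group G]
    {Γ : Subgroup G} {C : Set G} (hC : C * C⁻¹ ∩ (Γ : Set G) ⊆ {1}) :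
    Pairwise (Disjoint on fun γ : Γ => (γ : G) • C) := by
  intro γ γ' hne
  refine Set.disjoint_left.mpr ?_
  rintro _ ⟨c, hc, rfl⟩ ⟨c', hc', hcc'⟩
  have hmem : (γ' : G)⁻¹ * γ ∈ C * C⁻¹ ∩ (Γ : Set G) := by
    refine ⟨⟨c', hc', c⁻¹, Set.inv_mem_inv.mpr hc, ?_⟩, Γ.mul_mem (Γ.inv_mem γ'.2) γ.2⟩
    simp only [smul_eq_mul] at hcc'
    show c' * c⁻¹ = _
    rw [eq_inv_mul_iff_mul_eq, ← mul_assoc, hcc', mul_inv_cancel_right]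
  exact hne (Subtype.ext (inv_mul_eq_one.mp (hC hmem)).symm)

theorem setLIntegral_smul_eq_setLIntegral_mul_left {G : Type*} [Group G] [MeasurableSpace G]
    [MeasurableMul G] (μ : Measure G) [μ.IsMulLeftInvariant] (a : G) (C : Set G)
    (f : G → ℝ≥0∞) : ∫⁻ x in a • C, f x ∂μ = ∫⁻ g in C, f (a * g) ∂μ := by
  rw [← Set.image_smul]
  exact ((measurePreserving_mul_left μ a).setLIntegral_comp_emb
    (measurableEmbedding_const_smul a) f C).symm

theorem setLIntegral_iUnion_smul_eq_setLIntegral_tsum {G ι : Type*} [Group G]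
    [MeasurableSpace G] [MeasurableMul G] (μ : Measure G) [μ.IsMulLeftInvariant] [Countable ι]
    {a : ι → G} {C : Set G} (hC : MeasurableSet C) (hdisj : Pairwise (Disjoint on fun i => a i • C))
    {f : G → ℝ≥0∞} (hf : AEMeasurable f μ) :
    ∫⁻ x in ⋃ i, a i • C, f x ∂μ = ∫⁻ g in C, ∑' i, f (a i * g) ∂μ := by
  have hf_mul (i : ι) : AEMeasurable (fun g => f (a i * g)) (μ.restrict C) :=
    (hf.comp_quasiMeasurePreserving
      (measurePreserving_mul_left μ (a i)).quasiMeasurePreserving).restrict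
  rw [lintegral_iUnion (fun i => hC.const_smul (a i)) hdisj, lintegral_tsum hf_mul]
  exact tsum_congr fun i => setLIntegral_smul_eq_setLIntegral_mul_left μ (a i) C f

theorem setLIntegral_enorm_le_compl_of_ae_tsum_mul_left_eq_zero {G E : Type*} [Group G]
    [MeasurableSpace G] [MeasurableMul G] (μ : Measure G) [μ.IsMulLeftInvariant]
    [NormedAddCommGroup E] [CompleteSpace E] (Γ : Subgroup G) [Countable Γ]
    {φ : G → E} (hφ : AEStronglyMeasurable φ μ) {C : Set G} (hC : MeasurableSet C)
    (hCΓ : C * C⁻¹ ∩ (Γ : Set G) ⊆ {1}) (hzero : ∀ᵐ g ∂μ, ∑' γ : Γ, φ ((γ : G) * g) = 0) :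
    ∫⁻ g in C, ‖φ g‖ₑ ∂μ ≤ ∫⁻ g in Cᶜ, ‖φ g‖ₑ ∂μ := by
  have hdisj := Subgroup.pairwise_disjoint_smul_of_mul_inv_inter_subset_one hCΓ
  have hunion : ⋃ γ : ({1}ᶜ : Set Γ), ((γ : Γ) : G) • C ⊆ Cᶜ :=
    Set.iUnion_subset fun γ => by
      simpa using (hdisj (show (γ : Γ) ≠ 1 from γ.2)).subset_compl_right
  calc ∫⁻ g in C, ‖φ g‖ₑ ∂μ
      ≤ ∫⁻ g in C, ∑' γ : ({1}ᶜ : Set Γ), ‖φ (((γ : Γ) : G) * g)‖ₑ ∂μ := by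
        refine lintegral_mono_ae (ae_restrict_of_ae ?_)
        filter_upwards [hzero] with g hg
        simpa using enorm_le_tsum_compl_singleton_enorm_of_tsum_eq_zero hg 1
    _ = ∫⁻ x in ⋃ γ : ({1}ᶜ : Set Γ), ((γ : Γ) : G) • C, ‖φ x‖ₑ ∂μ :=
        (setLIntegral_iUnion_smul_eq_setLIntegral_tsum μ hC
          (hdisj.comp_of_injective Subtype.val_injective) hφ.enorm).symm
    _ ≤ ∫⁻ g in Cᶜ, ‖φ g‖ₑ ∂μ := lintegral_mono_set hunion

theorem stmt_3_general (G : Type*) [Group G] [TopologicalSpace G] [IsTopologicalGroup G]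
    [SecondCountableTopology G]
    [MeasurableSpace G] [BorelSpace G]
    (μ : Measure G) [μ.IsHaarMeasure]
    (Γ : Subgroup G) [DiscreteTopology Γ]
    (φ : G → ℂ) (hφ : Integrable φ μ)
    (C : Set G) (hC : MeasurableSet C)
    (hCC : C * C⁻¹ ∩ (Γ : Set G) = {1})
    (hbig : (∫ g in C, ‖φ g‖ ∂μ) > ∫ g in Cᶜ, ‖φ g‖ ∂μ) :
    ¬ (∀ᵐ g ∂μ, (∑' γ : Γ, φ ((γ : G) * g)) = 0) := by
  intro hzero
  have : Countable Γ := TopologicalSpace.separableSpace_iff_countable.mp inferInstance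
  have hle := setLIntegral_enorm_le_compl_of_ae_tsum_mul_left_eq_zero μ Γ
    hφ.aestronglyMeasurable hC hCC.subset hzero
  have hCc_fin : ∫⁻ g in Cᶜ, ‖φ g‖ₑ ∂μ ≠ ∞ := (hφ.restrict (s := Cᶜ)).2.ne
  refine hbig.not_ge ?_
  rw [integral_norm_eq_lintegral_enorm hφ.aestronglyMeasurable.restrict,
    integral_norm_eq_lintegral_enorm hφ.aestronglyMeasurable.restrict]
  exact ENNReal.toReal_mono hCc_fin hle

/-- Non-vanishing of Poincaré series: the function `g ↦ ∑_{γ ∈ Γ} φ(γ g)`, which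
represents `P_Γ φ` as an element of `L¹(Γ\G)`, is not almost everywhere zero. -/
theorem stmt_3 (G : Type*) [Group G] [TopologicalSpace G] [IsTopologicalGroup G]
    [LocallyCompactSpace G] [T2Space G] [SecondCountableTopology G]
    [MeasurableSpace G] [BorelSpace G]
    (μ : Measure G) [μ.IsHaarMeasure] [μ.IsMulRightInvariant]
    (Γ : Subgroup G) [DiscreteTopology Γ]
    (φ : G → ℂ) (hφ : Integrable φ μ)
    (C : Set G) (hC : MeasurableSet C)
    (hCC : C * C⁻¹ ∩ (Γ : Set G) = {1})
    (hbig : (∫ g in C, ‖φ g‖ ∂μ) > ∫ g in Cᶜ, ‖φ g‖ ∂μ) :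
    ¬ (∀ᵐ g ∂μ, (∑' γ : Γ, φ ((γ : G) * g)) = 0) :=
  stmt_3_general G μ Γ φ hφ C hC hCC hbig
end

section
/- The median of the beta distribution is strictly increasing in its first parameter: for a, b, ε > 0, M(a,b) < M(a+ε,b), where M(a,b) ∈ (0,1) is the unique point satisfying ∫₀^{M(a,b)} x^{a-1}(1-x)^{b-1} dx = ∫_{M(a,b)}^1 x^{a-1}(1-x)^{b-1} dx. -/
/-!
Put `f x = x^(a-1) (1-x)^(b-1)`, so that the Beta(a+ε, b) kernel is `x^ε f x`. Splitting at the
median `M'` of Beta(a+ε, b), the weight `x^ε` is below `M'^ε` on the left part and above it on the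
right part, so the balance of `x^ε f` at `M'` forces the `f`-mass left of `M'` to exceed the
`f`-mass right of it. Hence `M'` lies strictly right of the balance point `M` of `f`.
-/

open MeasureTheory Set

/-- `M` is the median of the Beta(a,b) distribution. -/
def IsBetaMedian (a b M : ℝ) : Prop :=
  M ∈ Set.Ioo (0 : ℝ) 1 ∧
    (∫ x in Set.Ioo (0 : ℝ) M, x ^ (a - 1) * (1 - x) ^ (b - 1))
      = ∫ x in Set.Ioo M 1, x ^ (a - 1) * (1 - x) ^ (b - 1)

theorem setIntegral_lt_setIntegral_of_forall_lt {X : Type*} [MeasurableSpace X] {μ : Measure X}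
    {s : Set X} {f g : X → ℝ} (hs : MeasurableSet s) (hμs : μ s ≠ 0)
    (hf : IntegrableOn f s μ) (hg : IntegrableOn g s μ) (hlt : ∀ x ∈ s, f x < g x) :
    ∫ x in s, f x ∂μ < ∫ x in s, g x ∂μ := by
  rw [← sub_pos, ← integral_sub hg hf, setIntegral_pos_iff_support_of_nonneg_ae]
  · exact (pos_iff_ne_zero.2 hμs).trans_le
      (measure_mono fun x hx => ⟨sub_ne_zero.2 (hlt x hx).ne', hx⟩)
  · exact (ae_restrict_iff' hs).2 (ae_of_all _ fun x hx => sub_nonneg.2 (hlt x hx).le)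
  · exact hg.sub hf

section Balance

variable {f w : ℝ → ℝ} {l m u : ℝ}

theorem integral_Ioo_lt_of_weighted_balance (hm : m ∈ Ioo l u)
    (hf : IntegrableOn f (Ioo l u)) (hwf : IntegrableOn (fun x => w x * f x) (Ioo l u))
    (hf_pos : ∀ x ∈ Ioo l u, 0 < f x) (hw : StrictMonoOn w (Ioo l u)) (hwm : 0 < w m)
    (hbal : ∫ x in Ioo l m, w x * f x = ∫ x in Ioo m u, w x * f x) :
    ∫ x in Ioo m u, f x < ∫ x in Ioo l m, f x := by
  have hleft : Ioo l m ⊆ Ioo l u := Ioo_subset_Ioo_right hm.2.le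
  have hright : Ioo m u ⊆ Ioo l u := Ioo_subset_Ioo_left hm.1.le
  have hlt_left : ∫ x in Ioo l m, w x * f x < ∫ x in Ioo l m, w m * f x :=
    setIntegral_lt_setIntegral_of_forall_lt measurableSet_Ioo (by simpa using hm.1)
      (hwf.mono_set hleft) ((hf.mono_set hleft).const_mul _) fun x hx =>
        mul_lt_mul_of_pos_right (hw (hleft hx) hm hx.2) (hf_pos x (hleft hx))
  have hlt_right : ∫ x in Ioo m u, w m * f x < ∫ x in Ioo m u, w x * f x :=
    setIntegral_lt_setIntegral_of_forall_lt measurableSet_Ioo (by simpa using hm.2)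
      ((hf.mono_set hright).const_mul _) (hwf.mono_set hright) fun x hx =>
        mul_lt_mul_of_pos_right (hw hm (hright hx) hx.1) (hf_pos x (hright hx))
  rw [integral_const_mul] at hlt_left hlt_right
  exact lt_of_mul_lt_mul_left (hlt_right.trans_eq hbal.symm |>.trans hlt_left) hwm.le

theorem lt_of_balance_of_integral_Ioo_lt {t : ℝ} (hmu : m ≤ u) (hlt : l ≤ t)
    (hf : IntegrableOn f (Ioo l u)) (hf_nonneg : ∀ x ∈ Ioo l u, 0 ≤ f x)
    (hbal : ∫ x in Ioo l m, f x = ∫ x in Ioo m u, f x)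
    (hmass : ∫ x in Ioo t u, f x < ∫ x in Ioo l t, f x) :
    m < t := by
  by_contra! htm
  have hmono : ∀ {s s' : Set ℝ}, MeasurableSet s' → s ⊆ s' → s' ⊆ Ioo l u →
      ∫ x in s, f x ≤ ∫ x in s', f x := fun hs' hss' hs'u =>
    setIntegral_mono_set (hf.mono_set hs'u)
      (ae_restrict_of_forall_mem hs' fun x hx => hf_nonneg x (hs'u hx)) hss'.eventuallyLE
  have hmass_le : ∫ x in Ioo l t, f x ≤ ∫ x in Ioo t u, f x :=
    calc ∫ x in Ioo l t, f x
        ≤ ∫ x in Ioo l m, f x :=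
          hmono measurableSet_Ioo (Ioo_subset_Ioo_right htm) (Ioo_subset_Ioo_right hmu)
      _ = ∫ x in Ioo m u, f x := hbal
      _ ≤ ∫ x in Ioo t u, f x :=
          hmono measurableSet_Ioo (Ioo_subset_Ioo_left htm) (Ioo_subset_Ioo_left hlt)
  exact hmass_le.not_gt hmass

end Balance

theorem integrableOn_betaKernel {a b : ℝ} (ha : 0 < a) (hb : 0 < b) :
    IntegrableOn (fun x : ℝ => x ^ (a - 1) * (1 - x) ^ (b - 1)) (Ioo 0 1) := by
  have h := (Complex.betaIntegral_convergent (u := a) (v := b) (by simpa) (by simpa)).norm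
  rw [intervalIntegrable_iff_integrableOn_Ioc_of_le zero_le_one] at h
  refine (h.mono_set Ioo_subset_Ioc_self).congr_fun (fun x hx => ?_) measurableSet_Ioo
  dsimp only
  have h1x : (1 : ℂ) - x = ((1 - x : ℝ) : ℂ) := by push_cast; ring
  rw [norm_mul, h1x, Complex.norm_cpow_eq_rpow_re_of_pos hx.1,
    Complex.norm_cpow_eq_rpow_re_of_pos (sub_pos.2 hx.2)]
  simp

theorem betaKernel_pos {a b x : ℝ} (hx : x ∈ Ioo (0 : ℝ) 1) :
    0 < x ^ (a - 1) * (1 - x) ^ (b - 1) :=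
  mul_pos (Real.rpow_pos_of_pos hx.1 _) (Real.rpow_pos_of_pos (sub_pos.2 hx.2) _)

theorem rpow_mul_betaKernel {a b ε x : ℝ} (hx : 0 < x) :
    x ^ ε * (x ^ (a - 1) * (1 - x) ^ (b - 1)) = x ^ (a + ε - 1) * (1 - x) ^ (b - 1) := by
  rw [show a + ε - 1 = ε + (a - 1) by ring, Real.rpow_add hx, mul_assoc]

theorem stmt_7 (a b ε M M' : ℝ) (ha : 0 < a) (hb : 0 < b) (hε : 0 < ε)
    (hM : IsBetaMedian a b M) (hM' : IsBetaMedian (a + ε) b M') :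
    M < M' := by
  set f : ℝ → ℝ := fun x => x ^ (a - 1) * (1 - x) ^ (b - 1)
  have hweight : EqOn (fun x => x ^ ε * f x) (fun x => x ^ (a + ε - 1) * (1 - x) ^ (b - 1))
      (Ioo 0 1) := fun x hx => rpow_mul_betaKernel hx.1
  have hbal : ∫ x in Ioo 0 M', x ^ ε * f x = ∫ x in Ioo M' 1, x ^ ε * f x := by
    rw [setIntegral_congr_fun measurableSet_Ioo (hweight.mono (Ioo_subset_Ioo_right hM'.1.2.le)),
      setIntegral_congr_fun measurableSet_Ioo (hweight.mono (Ioo_subset_Ioo_left hM'.1.1.le))]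
    exact hM'.2
  have hlt : ∫ x in Ioo M' 1, f x < ∫ x in Ioo 0 M', f x :=
    integral_Ioo_lt_of_weighted_balance hM'.1 (integrableOn_betaKernel ha hb)
      ((integrableOn_betaKernel (by linarith) hb).congr_fun hweight.symm measurableSet_Ioo)
      (fun x hx => betaKernel_pos hx)
      ((Real.strictMonoOn_rpow_Ici_of_exponent_pos hε).mono fun _ hx => le_of_lt (mem_Ioo.1 hx).1)
      (Real.rpow_pos_of_pos hM'.1.1 ε) hbal
  exact lt_of_balance_of_integral_Ioo_lt hM.1.2.le hM'.1.1.le (integrableOn_betaKernel ha hb)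
    (fun x hx => (betaKernel_pos hx).le) hM.2 hlt
end

section
/- Mean-median-mode inequality for the beta distribution: if 1 < a < b, then (a-1)/(a+b-2) < M(a,b) < a/(a+b); if 1 < b < a, then a/(a+b) < M(a,b) < (a-1)/(a+b-2), where M(a,b) is the median of the Beta(a,b) distribution. -/
/-!
Let `f x = x ^ (a - 1) * (1 - x) ^ (b - 1)` with `1 < a < b`, so that the mode `m` and the mean `μ`
both lie in `(0, 1/2)`. Comparing `f` with its reflection about a point `c` amounts to the sign of
`φ t = log f (c - t) - log f (c + t)`, whose derivative has the sign of a quadratic `C - D t²` with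
`D > 0`.

At `c = m` we have `C = 0`, so `f (m - t) < f (m + t)` on `(0, m)`: the interval `[0, m]` carries
less mass than its mirror image `[m, 2m]`, hence less than half the total mass, and `m` lies below
the median.

At `c = μ` we have `C > 0`, and `φ` first rises and then falls to `-∞`, so
`g t = f (μ - t) - f (μ + t)` changes sign exactly once, at some `t₁`. Then
`∫₀^μ (t₁ - t) g t dt > 0`, while `∫₀¹ (x - μ) f x dx = 0` turns `∫₀^μ t g t dt` into
`∫_{2μ}^1 (x - μ) f x dx ≥ μ ∫_{2μ}^1 f`. Together these give `∫₀^μ g > ∫_{2μ}^1 f`, i.e. more than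
half the mass lies in `[0, μ]`.

The case `b < a` follows from the symmetry `x ↦ 1 - x`.
-/

open MeasureTheory

open Set Real Filter Topology intervalIntegral

section Integrals

variable {f : ℝ → ℝ}

theorem monotoneOn_integral_sub_integral (hf : Continuous f) {u v : ℝ}
    (hf₀ : ∀ x ∈ Icc u v, 0 ≤ f x) :
    MonotoneOn (fun c => (∫ x in u..c, f x) - ∫ x in c..v, f x) (Icc u v) := by
  intro c hc d hd hcd
  have hcd₀ : 0 ≤ ∫ x in c..d, f x :=
    integral_nonneg hcd fun x hx => hf₀ x ⟨hc.1.trans hx.1, hx.2.trans hd.2⟩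
  have hI : ∀ x y, IntervalIntegrable f volume x y := hf.intervalIntegrable
  have h₁ := integral_add_adjacent_intervals (hI u c) (hI c d)
  have h₂ := integral_add_adjacent_intervals (hI c d) (hI d v)
  dsimp only
  linarith

theorem lt_median_of_integral_lt (hf : Continuous f) {u v M c : ℝ}
    (hf₀ : ∀ x ∈ Icc u v, 0 ≤ f x) (hM : M ∈ Icc u v) (hc : c ∈ Icc u v)
    (hMeq : ∫ x in u..M, f x = ∫ x in M..v, f x)
    (hclt : ∫ x in u..c, f x < ∫ x in c..v, f x) :
    c < M := by
  by_contra! hMc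
  have := monotoneOn_integral_sub_integral hf hf₀ hM hc hMc
  dsimp only at this
  linarith

theorem median_lt_of_integral_lt (hf : Continuous f) {u v M c : ℝ}
    (hf₀ : ∀ x ∈ Icc u v, 0 ≤ f x) (hM : M ∈ Icc u v) (hc : c ∈ Icc u v)
    (hMeq : ∫ x in u..M, f x = ∫ x in M..v, f x)
    (hcgt : ∫ x in c..v, f x < ∫ x in u..c, f x) :
    M < c := by
  by_contra! hcM
  have := monotoneOn_integral_sub_integral hf hf₀ hc hM hcM
  dsimp only at this
  linarith

theorem integral_reflect_sub_reflect (hf : Continuous f) (c : ℝ) :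
    ∫ t in 0..c, (f (c - t) - f (c + t)) = (∫ x in 0..c, f x) - ∫ x in c..2 * c, f x := by
  rw [integral_sub ((by fun_prop : Continuous fun t => f (c - t)).intervalIntegrable _ _)
    ((by fun_prop : Continuous fun t => f (c + t)).intervalIntegrable _ _),
    integral_comp_sub_left f c, integral_comp_add_left f c]
  simp [two_mul]

theorem integral_mul_reflect_sub_reflect (hf : Continuous f) {c : ℝ}
    (hmean : ∫ x in 0..1, (x - c) * f x = 0) :
    ∫ t in 0..c, t * (f (c - t) - f (c + t)) = ∫ x in 2 * c..1, (x - c) * f x := by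
  set h : ℝ → ℝ := fun x => (x - c) * f x
  have hh : Continuous h := by fun_prop
  have hI : ∀ x y, IntervalIntegrable h volume x y := hh.intervalIntegrable
  have hreflect : ∀ t, t * (f (c - t) - f (c + t)) = -(h (c - t) + h (c + t)) := by
    intro t
    simp only [h]
    ring
  simp_rw [hreflect]
  rw [intervalIntegral.integral_neg,
    integral_add ((by fun_prop : Continuous fun t => h (c - t)).intervalIntegrable _ _)
      ((by fun_prop : Continuous fun t => h (c + t)).intervalIntegrable _ _),
    integral_comp_sub_left h c, integral_comp_add_left h c, sub_self, sub_zero, add_zero,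
    integral_add_adjacent_intervals (hI 0 c) (hI c (c + c)), two_mul]
  have := integral_add_adjacent_intervals (hI 0 (c + c)) (hI (c + c) 1)
  linarith

theorem integral_lt_integral_of_reflect_lt (hf : Continuous f) {m : ℝ} (hm : 0 < m)
    (hm₁ : 2 * m ≤ 1) (hf₀ : ∀ x ∈ Icc (2 * m) 1, 0 ≤ f x)
    (hlt : ∀ t ∈ Ioo 0 m, f (m - t) < f (m + t)) :
    ∫ x in 0..m, f x < ∫ x in m..1, f x := by
  have hreflect : ∫ t in 0..m, (f (m - t) - f (m + t)) < 0 := by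
    rw [← neg_pos, ← intervalIntegral.integral_neg]
    exact intervalIntegral_pos_of_pos_on ((by fun_prop : Continuous _).intervalIntegrable _ _)
      (fun t ht => by linarith [hlt t ht]) hm
  have htail : 0 ≤ ∫ x in 2 * m..1, f x := integral_nonneg hm₁ hf₀
  rw [integral_reflect_sub_reflect hf] at hreflect
  rw [← integral_add_adjacent_intervals (hf.intervalIntegrable (μ := volume) m (2 * m))
    (hf.intervalIntegrable (2 * m) 1)]
  linarith

theorem integral_lt_integral_of_sign_change (hf : Continuous f) {μ t₁ : ℝ} 
    (ht₁ : t₁ ∈ Ioo 0 μ) (hμ : 2 * μ ≤ 1) (hf₀ : ∀ x ∈ Icc (2 * μ) 1, 0 ≤ f x)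
    (hmean : ∫ x in 0..1, (x - μ) * f x = 0)
    (hpos : ∀ t ∈ Ioo 0 t₁, f (μ + t) < f (μ - t))
    (hneg : ∀ t ∈ Ioo t₁ μ, f (μ - t) < f (μ + t)) :
    ∫ x in μ..1, f x < ∫ x in 0..μ, f x := by
  obtain ⟨ht₁₀, ht₁μ⟩ := ht₁
  set g : ℝ → ℝ := fun t => f (μ - t) - f (μ + t)
  have hI : ∀ (k : ℝ → ℝ), Continuous k → ∀ x y, IntervalIntegrable k volume x y :=
    fun k hk => hk.intervalIntegrable
  have hweighted : 0 < ∫ t in 0..μ, (t₁ - t) * g t := by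
    rw [← integral_add_adjacent_intervals (hI _ (by fun_prop) 0 t₁) (hI _ (by fun_prop) t₁ μ)]
    refine add_pos
      (intervalIntegral_pos_of_pos_on (hI _ (by fun_prop) _ _) (fun t ht => ?_) ht₁₀)
      (intervalIntegral_pos_of_pos_on (hI _ (by fun_prop) _ _) (fun t ht => ?_) ht₁μ)
    · exact mul_pos (by linarith [ht.2]) (sub_pos.2 (hpos t ht))
    · exact mul_pos_of_neg_of_neg (by linarith [ht.1]) (sub_neg.2 (hneg t ht))
  have hexpand :
      ∫ t in 0..μ, (t₁ - t) * g t = t₁ * (∫ t in 0..μ, g t) - ∫ t in 0..μ, t * g t := by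
    simp_rw [sub_mul]
    rw [integral_sub (hI _ (by fun_prop) _ _) (hI _ (by fun_prop) _ _),
      intervalIntegral.integral_const_mul]
  have htail₀ : 0 ≤ ∫ x in 2 * μ..1, f x := integral_nonneg hμ hf₀
  have htail : μ * ∫ x in 2 * μ..1, f x ≤ ∫ x in 2 * μ..1, (x - μ) * f x := by
    rw [← intervalIntegral.integral_const_mul]
    exact integral_mono_on hμ (hI _ (by fun_prop) _ _) (hI _ (by fun_prop) _ _)
      fun x hx => mul_le_mul_of_nonneg_right (by linarith [hx.1]) (hf₀ x hx)
  have hmass : t₁ * ∫ x in 2 * μ..1, f x < t₁ * ∫ t in 0..μ, g t :=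
    calc t₁ * ∫ x in 2 * μ..1, f x
        ≤ μ * ∫ x in 2 * μ..1, f x := mul_le_mul_of_nonneg_right ht₁μ.le htail₀
      _ ≤ ∫ x in 2 * μ..1, (x - μ) * f x := htail
      _ = ∫ t in 0..μ, t * g t := (integral_mul_reflect_sub_reflect hf hmean).symm
      _ < t₁ * ∫ t in 0..μ, g t := by linarith
  have := lt_of_mul_lt_mul_left hmass ht₁₀.le
  rw [integral_reflect_sub_reflect hf] at this
  rw [← integral_add_adjacent_intervals (hI f hf μ (2 * μ)) (hI f hf (2 * μ) 1)]
  linarith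

theorem exists_sign_change_of_strictMonoOn_of_strictAntiOn {φ : ℝ → ℝ} {τ c p : ℝ}
    (hτ : 0 < τ) (hp : p ∈ Ioo τ c) (hφc : ContinuousOn φ (Icc τ p)) (hφ₀ : φ 0 = 0)
    (hmono : StrictMonoOn φ (Icc 0 τ)) (hanti : StrictAntiOn φ (Ico τ c)) (hφp : φ p < 0) :
    ∃ t₁ ∈ Ioo 0 c, (∀ t ∈ Ioo 0 t₁, 0 < φ t) ∧ ∀ t ∈ Ioo t₁ c, φ t < 0 := by
  have hφτ : 0 < φ τ := hφ₀ ▸ hmono (left_mem_Icc.2 hτ.le) (right_mem_Icc.2 hτ.le) hτ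
  obtain ⟨t₁, ⟨hτt₁, ht₁p⟩, hφt₁⟩ :=
    intermediate_value_Ioo' hp.1.le hφc ⟨hφp, hφτ⟩
  have ht₁ : t₁ ∈ Ico τ c := ⟨hτt₁.le, ht₁p.trans hp.2⟩
  refine ⟨t₁, ⟨hτ.trans hτt₁, ht₁.2⟩, fun t ht => ?_, fun t ht => ?_⟩
  · rcases le_or_gt t τ with htτ | hτt
    · exact hφ₀ ▸ hmono (left_mem_Icc.2 hτ.le) ⟨ht.1.le, htτ⟩ ht.1
    · exact hφt₁ ▸ hanti ⟨hτt.le, ht.2.trans ht₁.2⟩ ht₁ ht.2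
  · exact hφt₁ ▸ hanti ht₁ ⟨ht₁.1.trans ht.1.le, ht.2⟩ ht.1

end Integrals

noncomputable def betaDensity (a b x : ℝ) : ℝ := x ^ (a - 1) * (1 - x) ^ (b - 1)

section BetaDensity

variable {a b : ℝ}

theorem continuous_betaDensity (ha : 1 ≤ a) (hb : 1 ≤ b) : Continuous (betaDensity a b) :=
  (continuous_rpow_const (by linarith)).mul
    ((continuous_rpow_const (by linarith)).comp (continuous_const.sub continuous_id))

theorem betaDensity_pos {x : ℝ} (hx : x ∈ Ioo 0 1) : 0 < betaDensity a b x :=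
  mul_pos (rpow_pos_of_pos hx.1 _) (rpow_pos_of_pos (sub_pos.2 hx.2) _)

theorem betaDensity_nonneg {x : ℝ} (hx : x ∈ Icc 0 1) : 0 ≤ betaDensity a b x :=
  mul_nonneg (rpow_nonneg hx.1 _) (rpow_nonneg (sub_nonneg.2 hx.2) _)

theorem betaDensity_zero (ha : 1 < a) : betaDensity a b 0 = 0 := by
  simp [betaDensity, zero_rpow (sub_ne_zero.2 ha.ne')]

theorem betaDensity_one_sub (x : ℝ) : betaDensity b a (1 - x) = betaDensity a b x := by
  rw [betaDensity, betaDensity, sub_sub_cancel, mul_comm]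

theorem log_betaDensity {x : ℝ} (hx : x ∈ Ioo 0 1) :
    log (betaDensity a b x) = (a - 1) * log x + (b - 1) * log (1 - x) := by
  have h₁ : 0 < 1 - x := sub_pos.2 hx.2
  rw [betaDensity, log_mul (rpow_pos_of_pos hx.1 _).ne' (rpow_pos_of_pos h₁ _).ne',
    log_rpow hx.1, log_rpow h₁]

theorem integral_sub_mean_mul_betaDensity (ha : 1 ≤ a) (hb : 1 ≤ b) :
    ∫ x in 0..1, (x - a / (a + b)) * betaDensity a b x = 0 := by
  have hab : 0 < a + b := by linarith
  have hderiv : ∀ x ∈ uIcc (0 : ℝ) 1, HasDerivAt (fun y => y ^ a * (1 - y) ^ b)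
      (-(a + b) * ((x - a / (a + b)) * betaDensity a b x)) x := by
    intro x hx
    rw [uIcc_of_le zero_le_one] at hx
    have h₁ : x ^ a = x ^ (a - 1) * x := by
      conv_lhs => rw [← sub_add_cancel a 1]
      rw [rpow_add' hx.1 (by linarith), rpow_one]
    have h₂ : (1 - x) ^ b = (1 - x) ^ (b - 1) * (1 - x) := by
      conv_lhs => rw [← sub_add_cancel b 1]
      rw [rpow_add' (sub_nonneg.2 hx.2) (by linarith), rpow_one]
    have hright := (hasDerivAt_rpow_const (Or.inr hb)).comp x ((hasDerivAt_id x).const_sub 1)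
    refine ((hasDerivAt_rpow_const (Or.inr ha)).mul hright).congr_deriv ?_
    simp only [Function.comp_apply, id, betaDensity, h₁, h₂]
    field_simp
    ring
  have hcont := continuous_betaDensity ha hb
  have := integral_eq_sub_of_hasDerivAt hderiv ((by fun_prop :
    Continuous fun x => -(a + b) * ((x - a / (a + b)) * betaDensity a b x)).intervalIntegrable _ _)
  rw [intervalIntegral.integral_const_mul, sub_self, zero_rpow (by linarith),
    zero_rpow (by linarith), mul_zero, zero_mul, sub_zero] at this
  exact (mul_eq_zero.1 this).resolve_left (by linarith)

end BetaDensity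

theorem isBetaMedian_iff {a b M : ℝ} : IsBetaMedian a b M ↔
    M ∈ Ioo 0 1 ∧ ∫ x in 0..M, betaDensity a b x = ∫ x in M..1, betaDensity a b x := by
  refine and_congr_right fun hM => ?_
  rw [integral_of_le hM.1.le, integral_of_le hM.2.le, integral_Ioc_eq_integral_Ioo,
    integral_Ioc_eq_integral_Ioo]
  rfl

theorem IsBetaMedian.symm {a b M : ℝ} (hM : IsBetaMedian a b M) : IsBetaMedian b a (1 - M) := by
  rw [isBetaMedian_iff] at hM ⊢
  obtain ⟨⟨hM₀, hM₁⟩, hMeq⟩ := hM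
  refine ⟨⟨by linarith, by linarith⟩, ?_⟩
  simp_rw [← betaDensity_one_sub (a := b) (b := a) (_ : ℝ)]
  rw [integral_comp_sub_left (betaDensity a b), integral_comp_sub_left (betaDensity a b)]
  simpa using hMeq.symm

noncomputable def betaLogRatio (a b c t : ℝ) : ℝ :=
  (a - 1) * (log (c - t) - log (c + t)) + (b - 1) * (log (1 - c + t) - log (1 - c - t))

section BetaLogRatio

variable {a b c : ℝ}

@[simp]
theorem betaLogRatio_zero : betaLogRatio a b c 0 = 0 := by
  simp [betaLogRatio]

theorem betaLogRatio_eq {t : ℝ} (h₁ : c - t ∈ Ioo 0 1) (h₂ : c + t ∈ Ioo 0 1) :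
    betaLogRatio a b c t = log (betaDensity a b (c - t)) - log (betaDensity a b (c + t)) := by
  rw [log_betaDensity h₁, log_betaDensity h₂, betaLogRatio,
    show 1 - (c - t) = 1 - c + t by ring, show 1 - (c + t) = 1 - c - t by ring]
  ring

theorem betaDensity_sub_lt_add_iff {t : ℝ} (h₁ : c - t ∈ Ioo 0 1) (h₂ : c + t ∈ Ioo 0 1) :
    betaDensity a b (c - t) < betaDensity a b (c + t) ↔ betaLogRatio a b c t < 0 := by
  rw [betaLogRatio_eq h₁ h₂, sub_neg, log_lt_log_iff (betaDensity_pos h₁) (betaDensity_pos h₂)]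

theorem betaDensity_add_lt_sub_iff {t : ℝ} (h₁ : c - t ∈ Ioo 0 1) (h₂ : c + t ∈ Ioo 0 1) :
    betaDensity a b (c + t) < betaDensity a b (c - t) ↔ 0 < betaLogRatio a b c t := by
  rw [betaLogRatio_eq h₁ h₂, sub_pos, log_lt_log_iff (betaDensity_pos h₂) (betaDensity_pos h₁)]

theorem hasDerivAt_betaLogRatio {t : ℝ} (h₁ : c - t ≠ 0) (h₂ : c + t ≠ 0)
    (h₃ : 1 - c + t ≠ 0) (h₄ : 1 - c - t ≠ 0) :
    HasDerivAt (betaLogRatio a b c)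
      (2 * ((b - 1) * (1 - c) * (c ^ 2 - t ^ 2) - (a - 1) * c * ((1 - c) ^ 2 - t ^ 2)) /
        ((c - t) * (c + t) * ((1 - c + t) * (1 - c - t)))) t := by
  have d₁ := ((hasDerivAt_id t).const_sub c).log h₁
  have d₂ := ((hasDerivAt_id t).const_add c).log h₂
  have d₃ := ((hasDerivAt_id t).const_add (1 - c)).log h₃
  have d₄ := ((hasDerivAt_id t).const_sub (1 - c)).log h₄
  refine (((d₁.sub d₂).const_mul (a - 1)).add ((d₃.sub d₄).const_mul (b - 1))).congr_deriv ?_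
  simp only [id]
  field_simp
  ring

theorem hasDerivAt_betaLogRatio_of_mem {t : ℝ} (ht : t ∈ Ico 0 c) (hc : 2 * c ≤ 1) :
    ∃ d, HasDerivAt (betaLogRatio a b c) (2 * ((b - 1) * (1 - c) * (c ^ 2 - t ^ 2) -
      (a - 1) * c * ((1 - c) ^ 2 - t ^ 2)) / d) t ∧ 0 < d := by
  obtain ⟨ht₀, htc⟩ := ht
  have h₁ : 0 < c - t := by linarith
  have h₂ : 0 < c + t := by linarith
  have h₃ : 0 < 1 - c + t := by linarith
  have h₄ : 0 < 1 - c - t := by linarith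
  exact ⟨_, hasDerivAt_betaLogRatio h₁.ne' h₂.ne' h₃.ne' h₄.ne', by positivity⟩

theorem continuousOn_betaLogRatio (hc : 2 * c ≤ 1) :
    ContinuousOn (betaLogRatio a b c) (Ico 0 c) :=
  fun _ ht => (hasDerivAt_betaLogRatio_of_mem (a := a) (b := b) ht hc).choose_spec.1
    |>.continuousAt.continuousWithinAt

theorem strictMonoOn_betaLogRatio {S : Set ℝ} (hS : Convex ℝ S) (hSc : S ⊆ Ico 0 c)
    (hc : 2 * c ≤ 1) (hnum : ∀ t ∈ interior S,
      0 < (b - 1) * (1 - c) * (c ^ 2 - t ^ 2) - (a - 1) * c * ((1 - c) ^ 2 - t ^ 2)) :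
    StrictMonoOn (betaLogRatio a b c) S := by
  refine strictMonoOn_of_deriv_pos hS ((continuousOn_betaLogRatio hc).mono hSc) fun t ht => ?_
  obtain ⟨d, hd, hd₀⟩ := hasDerivAt_betaLogRatio_of_mem (a := a) (b := b)
    (hSc (interior_subset ht)) hc
  rw [hd.deriv]
  exact div_pos (by linarith [hnum t ht]) hd₀

theorem strictAntiOn_betaLogRatio {S : Set ℝ} (hS : Convex ℝ S) (hSc : S ⊆ Ico 0 c)
    (hc : 2 * c ≤ 1) (hnum : ∀ t ∈ interior S,
      (b - 1) * (1 - c) * (c ^ 2 - t ^ 2) - (a - 1) * c * ((1 - c) ^ 2 - t ^ 2) < 0) :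
    StrictAntiOn (betaLogRatio a b c) S := by
  refine strictAntiOn_of_deriv_neg hS ((continuousOn_betaLogRatio hc).mono hSc) fun t ht => ?_
  obtain ⟨d, hd, hd₀⟩ := hasDerivAt_betaLogRatio_of_mem (a := a) (b := b)
    (hSc (interior_subset ht)) hc
  rw [hd.deriv]
  exact div_neg_of_neg_of_pos (by linarith [hnum t ht]) hd₀

end BetaLogRatio

section ModeMean

variable {a b : ℝ}

theorem betaMode_mem_Ioo (ha : 1 < a) (hab : a < b) :
    (a - 1) / (a + b - 2) ∈ Ioo 0 (1 / 2) := by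
  have hs : 0 < a + b - 2 := by linarith
  exact ⟨div_pos (by linarith) hs, by rw [div_lt_div_iff₀ hs two_pos]; linarith⟩

theorem betaMean_mem_Ioo (ha : 0 < a) (hab : a < b) : a / (a + b) ∈ Ioo 0 (1 / 2) := by
  have hs : 0 < a + b := by linarith
  exact ⟨div_pos ha hs, by rw [div_lt_div_iff₀ hs two_pos]; linarith⟩

theorem betaDensity_mode_sub_lt_mode_add (ha : 1 < a) (hab : a < b) {t : ℝ}
    (ht : t ∈ Ioo 0 ((a - 1) / (a + b - 2))) :
    betaDensity a b ((a - 1) / (a + b - 2) - t) <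
      betaDensity a b ((a - 1) / (a + b - 2) + t) := by
  obtain ⟨hm₀, hm₂⟩ := betaMode_mem_Ioo ha hab
  set m := (a - 1) / (a + b - 2) with hm
  have hs : 0 < a + b - 2 := by linarith
  have hanti : StrictAntiOn (betaLogRatio a b m) (Ico 0 m) := by
    refine strictAntiOn_betaLogRatio (convex_Ico 0 m) subset_rfl (by linarith) fun t ht => ?_
    rw [interior_Ico] at ht
    have hnum : (b - 1) * (1 - m) * (m ^ 2 - t ^ 2) - (a - 1) * m * ((1 - m) ^ 2 - t ^ 2)
        = (a + b - 2) * t ^ 2 * (2 * m - 1) := by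
      rw [hm]
      field_simp
      ring
    rw [hnum]
    exact mul_neg_of_pos_of_neg (mul_pos hs (pow_pos ht.1 2)) (by linarith)
  rw [betaDensity_sub_lt_add_iff ⟨by linarith [ht.2], by linarith [ht.1]⟩
    ⟨by linarith [ht.1], by linarith [ht.2]⟩]
  simpa using hanti (left_mem_Ico.2 hm₀) ⟨ht.1.le, ht.2⟩ ht.1

theorem exists_strictMonoOn_strictAntiOn_betaLogRatio_mean (ha : 1 < a) (hab : a < b) :
    ∃ τ ∈ Ioo 0 (a / (a + b)), StrictMonoOn (betaLogRatio a b (a / (a + b))) (Icc 0 τ) ∧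
      StrictAntiOn (betaLogRatio a b (a / (a + b))) (Ico τ (a / (a + b))) := by
  obtain ⟨hμ₀, hμ₂⟩ := betaMean_mem_Ioo (by linarith) hab
  set μ := a / (a + b) with hμ
  have hs : 0 < a + b - 1 := by linarith
  have hab₀ : 0 < a + b := by linarith
  have hμ' : 1 - μ = b / (a + b) := by
    rw [hμ]
    field_simp
    ring
  have hκ : 0 < (b - a) * (a + b - 1) / (a + b) := by
    have : 0 < b - a := by linarith
    positivity
  set τ := √(μ * (1 - μ) / (a + b - 1))
  have hτ₀ : 0 < τ := sqrt_pos.2 (div_pos (mul_pos hμ₀ (by linarith)) hs)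
  have hτμ : τ < μ := by
    rw [sqrt_lt' hμ₀, div_lt_iff₀ hs, sq, mul_assoc]
    refine mul_lt_mul_of_pos_left ?_ hμ₀
    rw [hμ', hμ, div_mul_eq_mul_div, div_lt_div_iff_of_pos_right hab₀]
    nlinarith
  have hnum : ∀ t, (b - 1) * (1 - μ) * (μ ^ 2 - t ^ 2) - (a - 1) * μ * ((1 - μ) ^ 2 - t ^ 2)
      = (b - a) * (a + b - 1) / (a + b) * (τ ^ 2 - t ^ 2) := by
    intro t
    rw [sq_sqrt (div_pos (mul_pos hμ₀ (by linarith)) hs).le, hμ', hμ]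
    field_simp
    ring
  refine ⟨τ, ⟨hτ₀, hτμ⟩,
    strictMonoOn_betaLogRatio (convex_Icc 0 τ) (Icc_subset_Ico_right hτμ) (by linarith)
      fun t ht => ?_,
    strictAntiOn_betaLogRatio (convex_Ico τ μ) (Ico_subset_Ico_left hτ₀.le) (by linarith)
      fun t ht => ?_⟩
  · rw [interior_Icc] at ht
    rw [hnum]
    exact mul_pos hκ (by nlinarith [ht.1, ht.2])
  · rw [interior_Ico] at ht
    rw [hnum]
    exact mul_neg_of_pos_of_neg hκ (by nlinarith [ht.1, ht.2])

theorem exists_betaDensity_mean_sign_change (ha : 1 < a) (hab : a < b) :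
    ∃ t₁ ∈ Ioo 0 (a / (a + b)),
      (∀ t ∈ Ioo 0 t₁, betaDensity a b (a / (a + b) + t) < betaDensity a b (a / (a + b) - t)) ∧
      ∀ t ∈ Ioo t₁ (a / (a + b)),
        betaDensity a b (a / (a + b) - t) < betaDensity a b (a / (a + b) + t) := by
  obtain ⟨hμ₀, hμ₂⟩ := betaMean_mem_Ioo (by linarith) hab
  obtain ⟨τ, ⟨hτ₀, hτμ⟩, hmono, hanti⟩ :=
    exists_strictMonoOn_strictAntiOn_betaLogRatio_mean ha hab
  set μ := a / (a + b)
  have hf := continuous_betaDensity ha.le (by linarith : 1 ≤ b)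
  have hsub : ∀ t ∈ Ioo 0 μ, μ - t ∈ Ioo 0 1 := fun t ht =>
    ⟨by linarith [ht.2], by linarith [ht.1]⟩
  have hadd : ∀ t ∈ Ioo 0 μ, μ + t ∈ Ioo 0 1 := fun t ht =>
    ⟨by linarith [ht.1], by linarith [ht.2]⟩
  -- at `t = μ` the left value is `f 0 = 0`, so `betaLogRatio` is negative somewhere in `(τ, μ)`
  have hend : ∀ᶠ t in 𝓝[<] μ, betaDensity a b (μ - t) < betaDensity a b (μ + t) := by
    refine nhdsWithin_le_nhds (ContinuousAt.eventually_lt (by fun_prop) (by fun_prop) ?_)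
    rw [sub_self, betaDensity_zero ha]
    exact betaDensity_pos ⟨by linarith, by linarith⟩
  obtain ⟨p, hp, hpτ⟩ := (hend.and (Ioo_mem_nhdsLT hτμ)).exists
  have hpμ : p ∈ Ioo 0 μ := ⟨hτ₀.trans hpτ.1, hpτ.2⟩
  have hcont : ContinuousOn (betaLogRatio a b μ) (Icc τ p) :=
    (continuousOn_betaLogRatio (by linarith)).mono fun t ht =>
      ⟨hτ₀.le.trans ht.1, ht.2.trans_lt hpτ.2⟩
  obtain ⟨t₁, ht₁, hpos, hneg⟩ := exists_sign_change_of_strictMonoOn_of_strictAntiOn hτ₀ hpτ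
    hcont betaLogRatio_zero hmono hanti
    ((betaDensity_sub_lt_add_iff (hsub p hpμ) (hadd p hpμ)).1 hp)
  refine ⟨t₁, ht₁, fun t ht => ?_, fun t ht => ?_⟩
  · have htμ : t ∈ Ioo 0 μ := ⟨ht.1, ht.2.trans ht₁.2⟩
    exact (betaDensity_add_lt_sub_iff (hsub t htμ) (hadd t htμ)).2 (hpos t ht)
  · have htμ : t ∈ Ioo 0 μ := ⟨ht₁.1.trans ht.1, ht.2⟩
    exact (betaDensity_sub_lt_add_iff (hsub t htμ) (hadd t htμ)).2 (hneg t ht)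

end ModeMean

namespace IsBetaMedian

variable {a b M : ℝ}

theorem mode_lt (hM : IsBetaMedian a b M) (ha : 1 < a) (hab : a < b) :
    (a - 1) / (a + b - 2) < M := by
  rw [isBetaMedian_iff] at hM
  obtain ⟨hm₀, hm₂⟩ := betaMode_mem_Ioo ha hab
  have hf := continuous_betaDensity ha.le (by linarith : 1 ≤ b)
  exact lt_median_of_integral_lt hf (fun x hx => betaDensity_nonneg hx) (Ioo_subset_Icc_self hM.1)
    ⟨hm₀.le, by linarith⟩ hM.2 <| integral_lt_integral_of_reflect_lt hf hm₀ (by linarith)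
      (fun x hx => betaDensity_nonneg ⟨by linarith [hx.1], hx.2⟩)
      fun t ht => betaDensity_mode_sub_lt_mode_add ha hab ht

theorem lt_mean (hM : IsBetaMedian a b M) (ha : 1 < a) (hab : a < b) : M < a / (a + b) := by
  rw [isBetaMedian_iff] at hM
  obtain ⟨hμ₀, hμ₂⟩ := betaMean_mem_Ioo (by linarith) hab
  obtain ⟨t₁, ht₁, hpos, hneg⟩ := exists_betaDensity_mean_sign_change ha hab
  have hf := continuous_betaDensity ha.le (by linarith : 1 ≤ b)
  exact median_lt_of_integral_lt hf (fun x hx => betaDensity_nonneg hx) (Ioo_subset_Icc_self hM.1)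
    ⟨hμ₀.le, by linarith⟩ hM.2 <| integral_lt_integral_of_sign_change hf ht₁ (by linarith)
      (fun x hx => betaDensity_nonneg ⟨by linarith [hx.1], hx.2⟩)
      (integral_sub_mean_mul_betaDensity ha.le (by linarith)) hpos hneg

end IsBetaMedian

theorem stmt_10 (a b M : ℝ) (hM : IsBetaMedian a b M) :
    (1 < a → a < b → (a - 1) / (a + b - 2) < M ∧ M < a / (a + b))
    ∧ (1 < b → b < a → a / (a + b) < M ∧ M < (a - 1) / (a + b - 2)) := by
  refine ⟨fun ha hab => ⟨hM.mode_lt ha hab, hM.lt_mean ha hab⟩, fun hb hba => ?_⟩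
  have hmode := hM.symm.mode_lt hb hba
  have hmean := hM.symm.lt_mean hb hba
  have hmode_symm : (b - 1) / (b + a - 2) = 1 - (a - 1) / (a + b - 2) := by
    rw [add_comm b a, eq_sub_iff_add_eq, ← add_div, div_eq_one_iff_eq (by linarith)]
    ring
  have hmean_symm : b / (b + a) = 1 - a / (a + b) := by
    rw [add_comm b a, eq_sub_iff_add_eq, ← add_div, div_eq_one_iff_eq (by linarith)]
    ring
  constructor <;> linarith
end

section
/- For r > 0 and positive integer N, the inequality √(N² + 2) > √(2 cosh(4r)) holds if and only if tanh²(r) < (√(4/N² + 1) - 2/N)². -/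
theorem stmt_13 (r : ℝ) (hr : 0 < r) (N : ℕ) (hN : 0 < N) :
    Real.sqrt ((N : ℝ) ^ 2 + 2) > Real.sqrt (2 * Real.cosh (4 * r)) ↔
      Real.tanh r ^ 2 < (Real.sqrt (4 / (N : ℝ) ^ 2 + 1) - 2 / (N : ℝ)) ^ 2 := by
  have hN0 : (0:ℝ) < N := by exact_mod_cast hN
  have hN1 : (1:ℝ) ≤ N := by exact_mod_cast hN
  have hc0 : 0 < Real.cosh r := Real.cosh_pos r
  have hc1 : 1 ≤ Real.cosh r := Real.one_le_cosh r
  set c := Real.cosh r with hc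
  have hsh : Real.sinh r ^ 2 = c ^ 2 - 1 := by
    have := Real.cosh_sq r; linarith
  have ht2 : Real.tanh r ^ 2 = (c ^ 2 - 1) / c ^ 2 := by
    rw [Real.tanh_eq_sinh_div_cosh, div_pow, hsh]
  set S := Real.sqrt ((N:ℝ) ^ 2 + 4) with hS
  have hS2 : S ^ 2 = (N:ℝ) ^ 2 + 4 := Real.sq_sqrt (by positivity)
  have hS0 : 0 ≤ S := Real.sqrt_nonneg _
  have hSgt : 2 < S := by nlinarith
  have h4 : Real.cosh (4 * r) = 2 * (2 * c ^ 2 - 1) ^ 2 - 1 := by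
    rw [show (4:ℝ) * r = 2 * (2 * r) by ring, Real.cosh_two_mul, Real.cosh_two_mul,
      Real.sinh_two_mul]
    linear_combination (Real.sinh r ^ 2 + 7 * c ^ 2 - 1) * hsh
  have hsq : Real.sqrt (4 / (N:ℝ) ^ 2 + 1) = S / N := by
    rw [show 4 / (N:ℝ) ^ 2 + 1 = ((N:ℝ) ^ 2 + 4) / (N:ℝ) ^ 2 by field_simp; ring,
      Real.sqrt_div (by positivity), Real.sqrt_sq hN0.le]
  have hch0 : 0 < Real.cosh (4 * r) := Real.cosh_pos _
  rw [gt_iff_lt, Real.sqrt_lt_sqrt_iff (by positivity), hsq, ht2, h4,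
    show S / (N:ℝ) - 2 / N = (S - 2) / N by ring, div_pow,
    div_lt_div_iff₀ (by positivity) (by positivity)]
  constructor
  · intro h
    have ha : 2 * (2 * c ^ 2 - 1) < S := by nlinarith
    have hp : 0 < (S - 2) * (S + 2 - 4 * c ^ 2) := by
      apply mul_pos <;> linarith
    nlinarith
  · intro h
    have h2 : 4 * c ^ 2 < S + 2 := by nlinarith
    nlinarith [mul_pos (show (0:ℝ) < S - (4 * c ^ 2 - 2) by linarith)
      (show (0:ℝ) < S + (4 * c ^ 2 - 2) by nlinarith)]
end
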